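/- arXiv:q-alg/9507006 — 2 statements merged into one kernel-verified Lean document; each statement's English description precedes it below -/
import Mathlib

section
/- Under hypotheses (H1)–(H3), the natural transformation F : Z ⟶ Z' with components F_X (characterized by F_X(v_Z(M)) = v_{Z'}(M) for all M : 𝟙 ⟶ X) is monoidal: F_𝟙 ∘ ε_Z = ε_{Z'} as maps k → Z'(𝟙), and for all objects X, Y of C, F_{X⊗Y} ∘ μ^Z_{X,Y} = μ^{Z'}_{X,Y} ∘ (F_X ⊗ F_Y) as maps Z(X) ⊗ Z(Y) → Z'(X ⊗ Y). -/
open CategoryTheory MonoidalCategory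

universe v u

/-- The distinguished vector `ε_Z(1) ∈ Z(𝟙)` determined by the unit isomorphism
`ε_Z : k ≅ Z(𝟙)` of a (strong) monoidal functor `Z : C ⥤ ModuleCat k`. -/
noncomputable def unitVec {k : Type*} [Field k] {C : Type u} [Category.{v} C]
    [MonoidalCategory C] (Z : C ⥤ ModuleCat k) [Z.Monoidal] : Z.obj (𝟙_ C) :=
  Functor.LaxMonoidal.ε Z (1 : k)

/-- `v_Z(M) := Z(M)(ε_Z(1)) ∈ Z(X)` for a morphism `M : 𝟙 ⟶ X`. -/
noncomputable def vec {k : Type*} [Field k] {C : Type u} [Category.{v} C]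
    [MonoidalCategory C] (Z : C ⥤ ModuleCat k) [Z.Monoidal] {X : C} (M : 𝟙_ C ⟶ X) :
    Z.obj X :=
  Z.map M (unitVec Z)

/-!
The vectors `v_Z(M)` are nonzero: closing `M` off by some `N : X ⟶ 𝟙` multiplies `ε_Z(1)`
by a nonzero scalar. As `Z(X)` is a line, every vector of it is then a multiple of one
`v_Z(M)`. Naturality of the tensorator and left unitality give
`μ(v_Z(M) ⊗ v_Z(N)) = v_Z(λ⁻¹ ≫ (M ⊗ N))`, so both sides of the tensor identity send
`v_Z(M) ⊗ v_Z(N)` to `v_{Z'}(λ⁻¹ ≫ (M ⊗ N))`, and by bilinearity they agree everywhere.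
-/

section Vec

variable {k : Type*} [Field k] {C : Type u} [Category.{v} C] [MonoidalCategory C]
  (Z : C ⥤ ModuleCat k) [Z.Monoidal]

lemma unitVec_ne_zero : unitVec Z ≠ 0 := by
  intro h
  have hη : Functor.OplaxMonoidal.η Z (unitVec Z) = (1 : k) := by
    rw [unitVec, ← ConcreteCategory.comp_apply, Functor.Monoidal.ε_η]
    rfl
  rw [h, map_zero] at hη
  exact zero_ne_one hη

lemma vec_id : vec Z (𝟙 (𝟙_ C)) = unitVec Z := by
  simp [vec]

lemma vec_comp {X Y : C} (M : 𝟙_ C ⟶ X) (f : X ⟶ Y) :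
    vec Z (M ≫ f) = Z.map f (vec Z M) := by
  simp [vec]

lemma vec_ne_zero_of_comp_eq_smul {X : C} {M : 𝟙_ C ⟶ X} {N : X ⟶ 𝟙_ C} {c : k}
    (hc : c ≠ 0) (h : vec Z (M ≫ N) = c • unitVec Z) : vec Z M ≠ 0 := by
  intro hM
  rw [vec_comp, hM, map_zero] at h
  exact unitVec_ne_zero Z ((smul_eq_zero.1 h.symm).resolve_left hc)

lemma μ_unitVec_tmul :
    Functor.LaxMonoidal.μ Z (𝟙_ C) (𝟙_ C) (unitVec Z ⊗ₜ[k] unitVec Z) =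
      Z.map (λ_ (𝟙_ C)).inv (unitVec Z) := by
  have hunit := ConcreteCategory.congr_hom (Functor.LaxMonoidal.left_unitality_inv Z (𝟙_ C))
    (unitVec Z)
  simp only [ConcreteCategory.comp_apply, ModuleCat.MonoidalCategory.leftUnitor_inv_apply,
    ModuleCat.MonoidalCategory.whiskerRight_apply] at hunit
  exact hunit

lemma μ_vec_tmul {X Y : C} (M : 𝟙_ C ⟶ X) (N : 𝟙_ C ⟶ Y) :
    Functor.LaxMonoidal.μ Z X Y (vec Z M ⊗ₜ[k] vec Z N) =
      vec Z ((λ_ (𝟙_ C)).inv ≫ (M ⊗ₘ N)) := by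
  have hnat := ConcreteCategory.congr_hom (Functor.LaxMonoidal.μ_natural Z M N)
    (unitVec Z ⊗ₜ[k] unitVec Z)
  simp only [ConcreteCategory.comp_apply, ModuleCat.MonoidalCategory.tensorHom_tmul,
    μ_unitVec_tmul] at hnat
  rw [vec_comp]
  exact hnat

end Vec

section Components

variable {k : Type*} [Field k] {C : Type u} [Category.{v} C] [MonoidalCategory C]
  {Z Z' : C ⥤ ModuleCat k} [Z.Monoidal] [Z'.Monoidal]

lemma map_ε_eq_of_map_unitVec {F : Z.obj (𝟙_ C) →ₗ[k] Z'.obj (𝟙_ C)}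
    (hF : F (unitVec Z) = unitVec Z') (x : 𝟙_ (ModuleCat k)) :
    F (Functor.LaxMonoidal.ε Z x) = Functor.LaxMonoidal.ε Z' x := by
  have hcomp : F ∘ₗ (Functor.LaxMonoidal.ε Z).hom = (Functor.LaxMonoidal.ε Z').hom :=
    LinearMap.ext_ring (by simpa [unitVec] using hF)
  exact DFunLike.congr_fun hcomp x

lemma map_μ_tmul_of_map_vec {F : ∀ X : C, Z.obj X →ₗ[k] Z'.obj X}
    (hF : ∀ (X : C) (M : 𝟙_ C ⟶ X), F X (vec Z M) = vec Z' M) {X Y : C}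
    (M : 𝟙_ C ⟶ X) (N : 𝟙_ C ⟶ Y) (a b : k) :
    F (X ⊗ Y) (Functor.LaxMonoidal.μ Z X Y ((a • vec Z M) ⊗ₜ[k] (b • vec Z N))) =
      Functor.LaxMonoidal.μ Z' X Y (F X (a • vec Z M) ⊗ₜ[k] F Y (b • vec Z N)) := by
  simp only [map_smul, TensorProduct.smul_tmul_smul, μ_vec_tmul, hF]

end Components

/-- Under (H1)–(H3), any family of linear maps `F_X : Z(X) → Z'(X)` with
`F_X (v_Z(M)) = v_{Z'}(M)` for all `M : 𝟙 ⟶ X` is monoidal: it is compatible with the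
unit isomorphisms, `F_𝟙 ∘ ε_Z = ε_{Z'}`, and with the tensorators,
`F_{X⊗Y} ∘ μ^Z_{X,Y} = μ^{Z'}_{X,Y} ∘ (F_X ⊗ F_Y)`. -/
theorem components_monoidal {k : Type*} [Field k] {C : Type u} [Category.{v} C]
    [MonoidalCategory C] (Z Z' : C ⥤ ModuleCat k) [Z.Monoidal] [Z'.Monoidal]
    -- (H1): every object admits a morphism from and a morphism to the unit object
    (H1 : ∀ X : C, Nonempty (𝟙_ C ⟶ X) ∧ Nonempty (X ⟶ 𝟙_ C))
    -- (H2): for every `f : 𝟙 ⟶ 𝟙` the scalars `⟨Z(f)⟩` and `⟨Z'(f)⟩` agree and are nonzero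
    (H2 : ∀ f : 𝟙_ C ⟶ 𝟙_ C, ∃ c : k, c ≠ 0 ∧
      Z.map f (unitVec Z) = c • unitVec Z ∧ Z'.map f (unitVec Z') = c • unitVec Z')
    -- (H3): all state spaces are one-dimensional
    (H3 : ∀ X : C, Module.finrank k (Z.obj X) = 1 ∧ Module.finrank k (Z'.obj X) = 1)
    (F : ∀ X : C, Z.obj X →ₗ[k] Z'.obj X)
    (hF : ∀ (X : C) (M : 𝟙_ C ⟶ X), F X (vec Z M) = vec Z' M) :
    (∀ x : 𝟙_ (ModuleCat k),
        F (𝟙_ C) (Functor.LaxMonoidal.ε Z x) = Functor.LaxMonoidal.ε Z' x) ∧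
    (∀ (X Y : C) (u : Z.obj X) (v : Z.obj Y),
        F (X ⊗ Y) (Functor.LaxMonoidal.μ Z X Y (u ⊗ₜ[k] v)) =
          Functor.LaxMonoidal.μ Z' X Y (F X u ⊗ₜ[k] F Y v)) := by
  have hspan (X : C) (M : 𝟙_ C ⟶ X) (u : Z.obj X) : ∃ a : k, a • vec Z M = u := by
    obtain ⟨N⟩ := (H1 X).2
    obtain ⟨c, hc, hcZ, -⟩ := H2 (M ≫ N)
    exact (finrank_eq_one_iff_of_nonzero' _
      (vec_ne_zero_of_comp_eq_smul Z hc hcZ)).1 (H3 X).1 u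
  refine ⟨map_ε_eq_of_map_unitVec (by rw [← vec_id Z, ← vec_id Z', hF]), fun X Y u v => ?_⟩
  obtain ⟨M⟩ := (H1 X).1
  obtain ⟨N⟩ := (H1 Y).1
  obtain ⟨a, rfl⟩ := hspan X M u
  obtain ⟨b, rfl⟩ := hspan Y N v
  exact map_μ_tmul_of_map_vec hF M N a b
end

section
/- Under hypotheses (H1)–(H3), any two monoidal natural transformations from Z to Z' are equal; consequently the monoidal natural isomorphism Z ≅ Z' is unique. -/
open CategoryTheory MonoidalCategory

universe v u

/-
A monoidal θ sends `ε_Z(1)` to `ε_{Z'}(1)`, so by naturality it sends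
`v_Z(M) = Z(M)(ε_Z(1))` to `v_{Z'}(M)` for every `M : 𝟙 ⟶ X`. Choosing also `N : X ⟶ 𝟙`,
`Z(N)(v_Z(M)) = ⟨Z(M ≫ N)⟩ • ε_Z(1) ≠ 0`, so `v_Z(M)` spans the line `Z(X)`. Hence `θ_X` is
pinned down on all of `Z(X)`.
-/

theorem LinearMap.eq_of_finrank_eq_one {k V W : Type*} [Field k] [AddCommGroup V] [Module k V]
    [AddCommGroup W] [Module k W] (hV : Module.finrank k V = 1) {v : V} (hv : v ≠ 0)
    {f g : V →ₗ[k] W} (hfg : f v = g v) : f = g :=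
  LinearMap.ext_on ((finrank_eq_one_iff_of_nonzero v hv).mp hV) (by simpa using hfg)

section

variable {k : Type*} [Field k] {C : Type u} [Category.{v} C] [MonoidalCategory C]

theorem unitVec_ne_zero_s6 (Z : C ⥤ ModuleCat k) [Z.Monoidal] : unitVec Z ≠ 0 := by
  intro h
  have hinv : (Functor.Monoidal.εIso Z).inv (unitVec Z) = (1 : k) :=
    congrArg (fun f : ModuleCat.of k k ⟶ ModuleCat.of k k => f (1 : k))
      (Functor.Monoidal.εIso Z).hom_inv_id
  rw [h, map_zero] at hinv
  exact zero_ne_one hinv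

theorem map_unitVec_ne_zero (Z : C ⥤ ModuleCat k) [Z.Monoidal] {X : C} (M : 𝟙_ C ⟶ X)
    (N : X ⟶ 𝟙_ C) {c : k} (hc : c ≠ 0) (hMN : Z.map (M ≫ N) (unitVec Z) = c • unitVec Z) :
    Z.map M (unitVec Z) ≠ 0 := by
  intro h
  rw [Z.map_comp, ModuleCat.comp_apply, h, map_zero] at hMN
  exact smul_ne_zero hc (unitVec_ne_zero_s6 Z) hMN.symm

variable {Z Z' : C ⥤ ModuleCat k} [Z.Monoidal] [Z'.Monoidal]

theorem CategoryTheory.NatTrans.IsMonoidal.app_unitVec {θ : Z ⟶ Z'}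
    (hθ : NatTrans.IsMonoidal θ) :
    θ.app (𝟙_ C) (unitVec Z) = unitVec Z' :=
  congrArg (fun f : ModuleCat.of k k ⟶ Z'.obj (𝟙_ C) => f (1 : k)) hθ.unit

theorem CategoryTheory.NatTrans.IsMonoidal.app_map_unitVec {θ : Z ⟶ Z'}
    (hθ : NatTrans.IsMonoidal θ) {X : C} (M : 𝟙_ C ⟶ X) :
    θ.app X (Z.map M (unitVec Z)) = Z'.map M (unitVec Z') := by
  rw [← hθ.app_unitVec, ← ModuleCat.comp_apply, θ.naturality, ModuleCat.comp_apply]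

end

/-- Under (H1)–(H3), any two monoidal natural transformations `Z ⟶ Z'` coincide; in
particular any two monoidal natural isomorphisms `Z ≅ Z'` coincide. -/
theorem monoidal_nat_trans_unique {k : Type*} [Field k] {C : Type u} [Category.{v} C]
    [MonoidalCategory C] (Z Z' : C ⥤ ModuleCat k) [Z.Monoidal] [Z'.Monoidal]
    -- (H1): every object admits a morphism from and a morphism to the unit object
    (H1 : ∀ X : C, Nonempty (𝟙_ C ⟶ X) ∧ Nonempty (X ⟶ 𝟙_ C))
    -- (H2): for every `f : 𝟙 ⟶ 𝟙` the scalars `⟨Z(f)⟩` and `⟨Z'(f)⟩` agree and are nonzero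
    (H2 : ∀ f : 𝟙_ C ⟶ 𝟙_ C, ∃ c : k, c ≠ 0 ∧
      Z.map f (unitVec Z) = c • unitVec Z ∧ Z'.map f (unitVec Z') = c • unitVec Z')
    -- (H3): all state spaces are one-dimensional
    (H3 : ∀ X : C, Module.finrank k (Z.obj X) = 1 ∧ Module.finrank k (Z'.obj X) = 1) :
    (∀ θ₁ θ₂ : Z ⟶ Z', NatTrans.IsMonoidal θ₁ → NatTrans.IsMonoidal θ₂ → θ₁ = θ₂) ∧
    (∀ F₁ F₂ : Z ≅ Z', NatTrans.IsMonoidal F₁.hom → NatTrans.IsMonoidal F₂.hom →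
      F₁ = F₂) := by
  have key : ∀ θ₁ θ₂ : Z ⟶ Z', NatTrans.IsMonoidal θ₁ → NatTrans.IsMonoidal θ₂ → θ₁ = θ₂ := by
    intro θ₁ θ₂ h₁ h₂
    ext X : 2
    obtain ⟨⟨M⟩, ⟨N⟩⟩ := H1 X
    obtain ⟨c, hc, hMN, -⟩ := H2 (M ≫ N)
    refine ModuleCat.hom_ext (LinearMap.eq_of_finrank_eq_one (H3 X).1
      (map_unitVec_ne_zero Z M N hc hMN) ?_)
    exact (h₁.app_map_unitVec M).trans (h₂.app_map_unitVec M).symm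
  exact ⟨key, fun F₁ F₂ h₁ h₂ => Iso.ext (key F₁.hom F₂.hom h₁ h₂)⟩
end
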